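/- Let 1 < p ≤ 2. There is a constant C = C(n,p) such that for all nonzero vectors A, B ∈ ℝⁿ: |A − B|^p ≤ C·( | |A|^((p−2)/2) A − |B|^((p−2)/2) B |² + | |A|^((p−2)/2) A − |B|^((p−2)/2) B |^p · |A|^((2−p)p/2) ). -/

import Mathlib

/-!
Write `V_t x = ‖x‖ ^ t • x`, so the map of the theorem is `V_t` with `t = (p - 2) / 2`.
For `-1/2 ≤ t ≤ 0` it is inverted by `V_r` with `r = -t / (t + 1) ∈ [0, 1]`, and `V_r` obeys
`‖V_r x - V_r y‖ ≤ 2 (‖x‖ + ‖y‖) ^ r ‖x - y‖`. Applied to `V_t A, V_t B` this gives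
`‖A - B‖ ≤ 2 (‖V A‖ + ‖V B‖) ^ r ‖V A - V B‖`; since `‖V B‖ ≤ ‖V A‖ + ‖V A - V B‖` and
`s ↦ s ^ (2 - p)` is subadditive, raising to the power `p` splits the right-hand side into the
two terms of the theorem, with `C = 4`.
-/

open Real

namespace Real

lemma mul_rpow_le_rpow_mul {r u v : ℝ} (hr1 : r ≤ 1) (hu : 0 ≤ u) (huv : u ≤ v) :
    u * v ^ r ≤ u ^ r * v := by
  have hv : 0 ≤ v := hu.trans huv
  have hsplit : ∀ w : ℝ, 0 ≤ w → w = w ^ r * w ^ (1 - r) := fun w hw => by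
    rw [← rpow_add' hw (by norm_num), add_sub_cancel, rpow_one]
  calc u * v ^ r = u ^ r * v ^ r * u ^ (1 - r) := by nth_rw 1 [hsplit u hu]; ring
    _ ≤ u ^ r * v ^ r * v ^ (1 - r) := by gcongr
    _ = u ^ r * v := by nth_rw 3 [hsplit v hv]; ring

lemma abs_rpow_sub_rpow_mul_add_le {r u v : ℝ} (hr0 : 0 ≤ r) (hr1 : r ≤ 1) (hu : 0 ≤ u)
    (hv : 0 ≤ v) : |u ^ r - v ^ r| * (u + v) ≤ 2 * (u + v) ^ r * |u - v| := by
  wlog huv : u ≤ v generalizing u v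
  · simpa only [abs_sub_comm, add_comm] using this hv hu (le_of_not_ge huv)
  have hmono : u ^ r ≤ v ^ r := rpow_le_rpow hu huv hr0
  rw [abs_of_nonpos (by linarith), abs_of_nonpos (by linarith)]
  have hkey := mul_rpow_le_rpow_mul hr1 hu huv
  have hvr : v ^ r ≤ (u + v) ^ r := rpow_le_rpow (by linarith) (by linarith) hr0
  calc -(u ^ r - v ^ r) * (u + v) ≤ 2 * v ^ r * (v - u) := by nlinarith
    _ ≤ 2 * (u + v) ^ r * -(u - v) := by rw [neg_sub]; gcongr

end Real

section NormRpowSMul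

variable {E : Type*} [NormedAddCommGroup E] [NormedSpace ℝ E]

noncomputable def normRpowSMul (r : ℝ) (x : E) : E := ‖x‖ ^ r • x

lemma norm_normRpowSMul {r : ℝ} (hr : r + 1 ≠ 0) (x : E) :
    ‖normRpowSMul r x‖ = ‖x‖ ^ (r + 1) := by
  rw [normRpowSMul, norm_smul, norm_of_nonneg (by positivity), rpow_add' (norm_nonneg x) hr,
    rpow_one]

lemma normRpowSMul_normRpowSMul {r t : ℝ} (ht : t + 1 ≠ 0) (hrt : (t + 1) * r + t = 0)
    (x : E) : normRpowSMul r (normRpowSMul t x) = x := by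
  rcases eq_or_ne x 0 with rfl | hx
  · simp [normRpowSMul]
  rw [normRpowSMul, norm_normRpowSMul ht, normRpowSMul, smul_smul, ← rpow_mul (norm_nonneg x),
    ← rpow_add (norm_pos_iff.mpr hx), hrt, rpow_zero, one_smul]

lemma norm_normRpowSMul_sub_le {r : ℝ} (hr0 : 0 ≤ r) (hr1 : r ≤ 1) (x y : E) :
    ‖normRpowSMul r x - normRpowSMul r y‖ ≤ 2 * (‖x‖ + ‖y‖) ^ r * ‖x - y‖ := by
  have hsplit : (2 : ℝ) • (normRpowSMul r x - normRpowSMul r y) =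
      (‖x‖ ^ r + ‖y‖ ^ r) • (x - y) + (‖x‖ ^ r - ‖y‖ ^ r) • (x + y) := by
    simp only [normRpowSMul, smul_sub, smul_add, add_smul, sub_smul, two_smul]; abel
  have hsum : ‖x‖ ^ r + ‖y‖ ^ r ≤ 2 * (‖x‖ + ‖y‖) ^ r := by
    have hx : ‖x‖ ^ r ≤ (‖x‖ + ‖y‖) ^ r := by gcongr; linarith [norm_nonneg y]
    have hy : ‖y‖ ^ r ≤ (‖x‖ + ‖y‖) ^ r := by gcongr; linarith [norm_nonneg x]
    linarith
  have hdiff : |‖x‖ ^ r - ‖y‖ ^ r| * ‖x + y‖ ≤ 2 * (‖x‖ + ‖y‖) ^ r * ‖x - y‖ :=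
    calc |‖x‖ ^ r - ‖y‖ ^ r| * ‖x + y‖ ≤ |‖x‖ ^ r - ‖y‖ ^ r| * (‖x‖ + ‖y‖) := by
          gcongr; exact norm_add_le x y
      _ ≤ 2 * (‖x‖ + ‖y‖) ^ r * |‖x‖ - ‖y‖| :=
          abs_rpow_sub_rpow_mul_add_le hr0 hr1 (norm_nonneg x) (norm_nonneg y)
      _ ≤ 2 * (‖x‖ + ‖y‖) ^ r * ‖x - y‖ := by gcongr; exact abs_norm_sub_norm_le x y
  have h2 := congrArg norm hsplit
  rw [norm_smul, Real.norm_two] at h2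
  have htri := norm_add_le ((‖x‖ ^ r + ‖y‖ ^ r) • (x - y)) ((‖x‖ ^ r - ‖y‖ ^ r) • (x + y))
  rw [norm_smul, norm_smul, norm_of_nonneg (by positivity), Real.norm_eq_abs] at htri
  have : (‖x‖ ^ r + ‖y‖ ^ r) * ‖x - y‖ ≤ 2 * (‖x‖ + ‖y‖) ^ r * ‖x - y‖ := by gcongr
  linarith

lemma norm_sub_le_of_normRpowSMul {t : ℝ} (ht0 : t ≤ 0) (ht : -1 / 2 ≤ t) (x y : E) :
    ‖x - y‖ ≤ 2 * (‖x‖ ^ (t + 1) + ‖y‖ ^ (t + 1)) ^ (-t / (t + 1)) *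
      ‖normRpowSMul t x - normRpowSMul t y‖ := by
  have ht1 : t + 1 ≠ 0 := by linarith
  have hr0 : 0 ≤ -t / (t + 1) := div_nonneg (by linarith) (by linarith)
  have hr1 : -t / (t + 1) ≤ 1 := by rw [div_le_one (by linarith)]; linarith
  have hinv : (t + 1) * (-t / (t + 1)) + t = 0 := by field_simp; ring
  have h := norm_normRpowSMul_sub_le hr0 hr1 (normRpowSMul t x) (normRpowSMul t y)
  rwa [normRpowSMul_normRpowSMul ht1 hinv, normRpowSMul_normRpowSMul ht1 hinv,
    norm_normRpowSMul ht1, norm_normRpowSMul ht1] at h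

end NormRpowSMul

lemma rpow_le_of_le_mul_add_rpow {p d D α : ℝ} (hp1 : 1 ≤ p) (hp2 : p ≤ 2) (hd : 0 ≤ d)
    (hD : 0 ≤ D) (hα : 0 ≤ α) (h : d ≤ 2 * (2 * α + D) ^ ((2 - p) / p) * D) :
    d ^ p ≤ 4 * (D ^ (2 : ℝ) + D ^ p * α ^ (2 - p)) := by
  have hp0 : 0 < p := by linarith
  have hsub : (2 * α + D) ^ (2 - p) ≤ 2 ^ (2 - p) * α ^ (2 - p) + D ^ (2 - p) := by
    rw [← mul_rpow zero_le_two hα]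
    exact rpow_add_le_add_rpow (by positivity) hD (by linarith) (by linarith)
  have htwo : (2 : ℝ) ^ p ≤ 4 := by
    calc (2 : ℝ) ^ p ≤ 2 ^ (2 : ℝ) := rpow_le_rpow_of_exponent_le one_le_two hp2
      _ = 4 := by norm_num
  have hD2 : D ^ (2 - p) * D ^ p = D ^ (2 : ℝ) := by
    rw [← rpow_add' hD (by norm_num), sub_add_cancel]
  have h24 : (2 : ℝ) ^ p * 2 ^ (2 - p) = 4 := by
    rw [← rpow_add zero_lt_two, add_sub_cancel]; norm_num
  calc d ^ p ≤ (2 * (2 * α + D) ^ ((2 - p) / p) * D) ^ p := by gcongr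
    _ = 2 ^ p * (2 * α + D) ^ (2 - p) * D ^ p := by
      rw [mul_rpow (by positivity) hD, mul_rpow zero_le_two (by positivity), ← rpow_mul
        (by positivity), div_mul_cancel₀ _ hp0.ne']
    _ ≤ 2 ^ p * (2 ^ (2 - p) * α ^ (2 - p) + D ^ (2 - p)) * D ^ p := by gcongr
    _ = 4 * (D ^ p * α ^ (2 - p)) + 2 ^ p * D ^ (2 : ℝ) := by
      rw [← hD2, ← h24]; ring
    _ ≤ 4 * (D ^ (2 : ℝ) + D ^ p * α ^ (2 - p)) := by
      have : 2 ^ p * D ^ (2 : ℝ) ≤ 4 * D ^ (2 : ℝ) := by gcongr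
      linarith

/-- Elementary vector inequality for the singular range 1 < p ≤ 2,
    with V(A) = |A|^((p−2)/2) A. -/
theorem p_le_two_vector_inequality (n : ℕ) (p : ℝ) (hp1 : 1 < p) (hp2 : p ≤ 2) :
    ∃ C : ℝ, 0 < C ∧
      ∀ A B : EuclideanSpace ℝ (Fin n), A ≠ 0 → B ≠ 0 →
        ‖A - B‖ ^ p ≤
          C * (‖(‖A‖ ^ ((p - 2) / 2)) • A - (‖B‖ ^ ((p - 2) / 2)) • B‖ ^ (2:ℝ) +
            ‖(‖A‖ ^ ((p - 2) / 2)) • A - (‖B‖ ^ ((p - 2) / 2)) • B‖ ^ p *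
              ‖A‖ ^ ((2 - p) * p / 2)) := by
  refine ⟨4, by norm_num, fun A B _ _ => ?_⟩
  have hexp : (p - 2) / 2 + 1 = p / 2 := by ring
  have hd := norm_sub_le_of_normRpowSMul (t := (p - 2) / 2) (by linarith) (by linarith) A B
  set V := normRpowSMul (E := EuclideanSpace ℝ (Fin n)) ((p - 2) / 2)
  rw [hexp, show -((p - 2) / 2) / (p / 2) = (2 - p) / p by field_simp; ring] at hd
  have hVA : ‖V A‖ = ‖A‖ ^ (p / 2) := by rw [norm_normRpowSMul (by linarith), hexp]
  have hVB : ‖V B‖ = ‖B‖ ^ (p / 2) := by rw [norm_normRpowSMul (by linarith), hexp]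
  have hsum : ‖A‖ ^ (p / 2) + ‖B‖ ^ (p / 2) ≤ 2 * ‖A‖ ^ (p / 2) + ‖V A - V B‖ := by
    have := norm_le_insert' (V B) (V A)
    rw [hVA, hVB, norm_sub_rev] at this
    linarith
  replace hd : ‖A - B‖ ≤ 2 * (2 * ‖A‖ ^ (p / 2) + ‖V A - V B‖) ^ ((2 - p) / p) * ‖V A - V B‖ :=
    hd.trans (by gcongr)
  have key := rpow_le_of_le_mul_add_rpow hp1.le hp2 (norm_nonneg _) (norm_nonneg _)
    (by positivity) hd
  rwa [← rpow_mul (norm_nonneg A), show p / 2 * (2 - p) = (2 - p) * p / 2 by ring] at key
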